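/- (Theorem 1, upper bound, high-loss regime.) For every γ ∈ (0, 1/√2] and every γ-admissible triple (Π₀,Π₁,Π_∅), the guessing value satisfies V = (1/2)·Tr[ρ₀Π₀ + ρ₁Π₁] ≤ γ²·(1 + 1/√2)/2. -/

import Mathlib

open Matrix Complex Kronecker BigOperators ComplexOrder

noncomputable section

abbrev Mat2 := Matrix (Fin 2) (Fin 2) ℂ
abbrev Mat4 := Matrix (Fin 2 × Fin 2) (Fin 2 × Fin 2) ℂ

/-- Pauli X matrix -/
def PX : Mat2 := !![0, 1; 1, 0]

/-- Pauli Y matrix -/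
def PY : Mat2 := !![0, -Complex.I; Complex.I, 0]

/-- sign (−1)^b for a bit b -/
def bsign (b : Bool) : ℂ := if b then -1 else 1

/-- boolean function f(x̄,ȳ) = (x₁·y₁) XOR x₂ XOR y₂ -/
def fxy (x y : Bool × Bool) : Bool := (((x.1 && y.1)).xor x.2).xor y.2

/-- qubit input states ω_{x̄}: ω_{(0,x₂)} = (I+(−1)^{x₂}X)/2, ω_{(1,x₂)} = (I+(−1)^{x₂}Y)/2 -/
def omg (x : Bool × Bool) : Mat2 :=
  (1/2 : ℂ) • ((1 : Mat2) + bsign x.2 • (if x.1 then PY else PX))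

/-- qubit input states τ_{ȳ} = (I+(−1)^{y₂}(X+(−1)^{y₁}Y)/√2)/2 -/
def tau (y : Bool × Bool) : Mat2 :=
  (1/2 : ℂ) • ((1 : Mat2) + (bsign y.2 / (Real.sqrt 2 : ℂ)) • (PX + bsign y.1 • PY))

/-- averaged input states ρ₀ (for c = false) and ρ₁ (for c = true) -/
def rho (c : Bool) : Mat4 :=
  (1/8 : ℂ) • ∑ x : Bool × Bool, ∑ y : Bool × Bool,
    (if fxy x y = c then omg x ⊗ₖ tau y else 0)

/-- standard basis vectors of ℂ⁴ ≅ ℂ² ⊗ ℂ² -/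
def ket (i j : Fin 2) : (Fin 2 × Fin 2) → ℂ := fun p => if p = (i, j) then 1 else 0

def PhiP : (Fin 2 × Fin 2) → ℂ := fun p => (1 / (Real.sqrt 2 : ℂ)) * (ket 0 0 p + ket 1 1 p)
def PhiM : (Fin 2 × Fin 2) → ℂ := fun p => (1 / (Real.sqrt 2 : ℂ)) * (ket 0 0 p - ket 1 1 p)
def PsiP : (Fin 2 × Fin 2) → ℂ := fun p => (1 / (Real.sqrt 2 : ℂ)) * (ket 0 1 p + ket 1 0 p)
def PsiM : (Fin 2 × Fin 2) → ℂ := fun p => (1 / (Real.sqrt 2 : ℂ)) * (ket 0 1 p - ket 1 0 p)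

/-- rank one projector |v⟩⟨v| -/
def proj (v : (Fin 2 × Fin 2) → ℂ) : Mat4 := Matrix.vecMulVec v (star v)

/-- a γ-admissible measurement triple -/
def Admissible (γ : ℝ) (P0 P1 Pe : Mat4) : Prop :=
  P0.PosSemidef ∧ P1.PosSemidef ∧ Pe.PosSemidef ∧
  P0 + P1 + Pe = 1 ∧
  ∀ x y : Bool × Bool, ((omg x ⊗ₖ tau y) * Pe).trace = 1 - (γ : ℂ)^2

/-- guessing value V = (1/2)·Tr[ρ₀Π₀ + ρ₁Π₁] (a real number) -/
def Gval (P0 P1 : Mat4) : ℝ := (1/2) * ((rho false * P0 + rho true * P1).trace).re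

/-!
The averaged states are Bell-diagonal: `ρ_c = I/4 ± (X ⊗ X + Y ⊗ Y)/(8√2)` and
`X ⊗ X + Y ⊗ Y = 2 (|Ψ⁺⟩⟨Ψ⁺| − |Ψ⁻⟩⟨Ψ⁻|)`, so `ρ_c ≤ λ I` with `λ = (1 + 1/√2)/4`.
Hence `V ≤ (λ/2) Tr (Π₀ + Π₁)`. The sixteen product states `ω_x ⊗ τ_y` sum to `4 I`, so the
loss constraint forces `Tr Π_∅ = 4 (1 − γ²)` and therefore `Tr (Π₀ + Π₁) = 4 γ²`.
-/

lemma Matrix.PosSemidef.trace_mul_nonneg {n : Type*} [Fintype n] {A B : Matrix n n ℂ}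
    (hA : A.PosSemidef) (hB : B.PosSemidef) : 0 ≤ (A * B).trace := by
  classical
  obtain ⟨C, rfl⟩ : ∃ C : Matrix n n ℂ, B = star C * C := by
    open scoped MatrixOrder in exact CStarAlgebra.nonneg_iff_eq_star_mul_self.mp hB.nonneg
  rw [← Matrix.mul_assoc, Matrix.trace_mul_cycle]
  exact (hA.mul_mul_conjTranspose_same C).trace_nonneg

lemma Matrix.PosSemidef.re_trace_mul_le {n : Type*} [Fintype n] [DecidableEq n]
    {A P : Matrix n n ℂ} {c : ℝ} (hA : ((c : ℂ) • 1 - A).PosSemidef) (hP : P.PosSemidef) :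
    (A * P).trace.re ≤ c * P.trace.re := by
  have h := (Complex.le_def.mp (hA.trace_mul_nonneg hP)).1
  simp only [Matrix.sub_mul, Matrix.trace_sub, Matrix.smul_mul, Matrix.one_mul,
    Matrix.trace_smul, smul_eq_mul, Complex.zero_re, Complex.sub_re, Complex.re_ofReal_mul] at h
  linarith

lemma sum_kronecker_sum {ι κ l m n p R : Type*} [Fintype ι] [Fintype κ] [CommSemiring R]
    (A : ι → Matrix l m R) (B : κ → Matrix n p R) :
    ∑ i, ∑ j, A i ⊗ₖ B j = (∑ i, A i) ⊗ₖ (∑ j, B j) := by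
  ext ⟨a, b⟩ ⟨c, d⟩
  simp [Matrix.sum_apply, Finset.sum_mul_sum]

lemma inv_sqrt_two_mul_self : ((Real.sqrt 2 : ℂ))⁻¹ * ((Real.sqrt 2 : ℂ))⁻¹ = 1 / 2 := by
  rw [← mul_inv, ← Complex.ofReal_mul, Real.mul_self_sqrt zero_le_two]
  norm_num

lemma sum_omg : ∑ x, omg x = (2 : ℂ) • 1 := by
  ext i j
  fin_cases i <;> fin_cases j <;>
    simp [Fintype.sum_prod_type, omg, bsign, PX, PY] <;> ring

lemma sum_tau : ∑ y, tau y = (2 : ℂ) • 1 := by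
  ext i j
  fin_cases i <;> fin_cases j <;>
    simp [Fintype.sum_prod_type, tau, bsign, PX, PY] <;> ring

lemma sum_omg_kronecker_tau : ∑ x, ∑ y, omg x ⊗ₖ tau y = (4 : ℂ) • 1 := by
  rw [sum_kronecker_sum, sum_omg, sum_tau, smul_kronecker, kronecker_smul, one_kronecker_one,
    smul_smul]
  norm_num

lemma trace_eq_of_forall_trace_kronecker_mul_eq {P : Mat4} {t : ℂ}
    (h : ∀ x y, ((omg x ⊗ₖ tau y) * P).trace = t) : P.trace = 4 * t := by
  have hsum : ((∑ x, ∑ y, omg x ⊗ₖ tau y) * P).trace = 16 * t := by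
    simp only [Finset.sum_mul, Matrix.trace_sum, h, Finset.sum_const, Finset.card_univ,
      Fintype.card_prod, Fintype.card_bool, nsmul_eq_mul]
    ring
  rw [sum_omg_kronecker_tau, Matrix.smul_mul, Matrix.one_mul, Matrix.trace_smul,
    smul_eq_mul] at hsum
  linear_combination hsum / 4

lemma Admissible.trace_add {γ : ℝ} {P0 P1 Pe : Mat4} (h : Admissible γ P0 P1 Pe) :
    P0.trace + P1.trace = 4 * (γ : ℂ) ^ 2 := by
  obtain ⟨-, -, -, hsum, hloss⟩ := h
  have htrace := congrArg Matrix.trace hsum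
  rw [Matrix.trace_add, Matrix.trace_add, trace_eq_of_forall_trace_kronecker_mul_eq hloss,
    Matrix.trace_one, Fintype.card_prod, Fintype.card_fin] at htrace
  push_cast at htrace
  linear_combination htrace

lemma rho_eq (c : Bool) :
    rho c = (1/4 : ℂ) • 1 + (bsign c / (8 * Real.sqrt 2)) • (PX ⊗ₖ PX + PY ⊗ₖ PY) := by
  cases c <;>
  · simp only [rho, omg, tau, fxy, bsign, Fintype.sum_prod_type, Fintype.sum_bool,
      Bool.and_true, Bool.and_false, Bool.xor_true, Bool.xor_false, Bool.not_true,
      Bool.not_false, if_true, if_false, Bool.true_eq_false, Bool.false_eq_true,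
      add_kronecker, kronecker_add, smul_kronecker, kronecker_smul, zero_add, add_zero,
      one_kronecker_one]
    module

lemma pauli_kronecker_sum_eq :
    PX ⊗ₖ PX + PY ⊗ₖ PY = (2 : ℂ) • (proj PsiP - proj PsiM) := by
  ext ⟨i, k⟩ ⟨j, l⟩
  fin_cases i <;> fin_cases k <;> fin_cases j <;> fin_cases l <;>
    norm_num [PX, PY, proj, PsiP, PsiM, ket, Matrix.vecMulVec_apply, inv_sqrt_two_mul_self]

lemma bell_completeness : proj PhiP + proj PhiM + proj PsiP + proj PsiM = 1 := by
  ext ⟨i, k⟩ ⟨j, l⟩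
  fin_cases i <;> fin_cases k <;> fin_cases j <;> fin_cases l <;>
    norm_num [proj, PhiP, PhiM, PsiP, PsiM, ket, Matrix.vecMulVec_apply, Matrix.one_apply,
      inv_sqrt_two_mul_self]

lemma posSemidef_proj (v : Fin 2 × Fin 2 → ℂ) : (proj v).PosSemidef :=
  posSemidef_vecMulVec_self_star v

lemma posSemidef_two_smul_one_sub_bsign_smul_pauli (c : Bool) :
    ((2 : ℂ) • 1 - bsign c • (PX ⊗ₖ PX + PY ⊗ₖ PY)).PosSemidef := by
  rw [pauli_kronecker_sum_eq, ← bell_completeness]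
  have h2 : (0 : ℂ) ≤ 2 := by norm_num
  have h4 : (0 : ℂ) ≤ 4 := by norm_num
  cases c
  · convert ((posSemidef_proj PhiP).add (posSemidef_proj PhiM)).smul h2 |>.add
      ((posSemidef_proj PsiM).smul h4) using 1
    simp only [bsign, Bool.false_eq_true, ↓reduceIte]
    module
  · convert ((posSemidef_proj PhiP).add (posSemidef_proj PhiM)).smul h2 |>.add
      ((posSemidef_proj PsiP).smul h4) using 1
    simp only [bsign, ↓reduceIte]
    module

lemma posSemidef_smul_one_sub_rho (c : Bool) :
    ((((1 + 1 / Real.sqrt 2) / 4 : ℝ) : ℂ) • 1 - rho c).PosSemidef := by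
  have hcoef : (0 : ℂ) ≤ ((1 / (8 * Real.sqrt 2) : ℝ) : ℂ) :=
    Complex.zero_le_real.mpr (by positivity)
  convert (posSemidef_two_smul_one_sub_bsign_smul_pauli c).smul hcoef using 1
  rw [rho_eq]
  push_cast
  module

lemma Gval_le_of_posSemidef {P0 P1 : Mat4} (hP0 : P0.PosSemidef) (hP1 : P1.PosSemidef) :
    Gval P0 P1 ≤ (1 + 1 / Real.sqrt 2) / 8 * (P0.trace + P1.trace).re := by
  have h0 := (posSemidef_smul_one_sub_rho false).re_trace_mul_le hP0
  have h1 := (posSemidef_smul_one_sub_rho true).re_trace_mul_le hP1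
  rw [Gval, Matrix.trace_add, Complex.add_re, Complex.add_re]
  linarith

theorem guessing_upper_bound_high_loss_general (γ : ℝ) (P0 P1 Pe : Mat4) (h : Admissible γ P0 P1 Pe) :
    Gval P0 P1 ≤ γ^2 * (1 + 1/Real.sqrt 2)/2 := by
  calc Gval P0 P1 ≤ (1 + 1 / Real.sqrt 2) / 8 * (P0.trace + P1.trace).re :=
        Gval_le_of_posSemidef h.1 h.2.1
    _ = γ^2 * (1 + 1/Real.sqrt 2)/2 := by
        rw [h.trace_add, ← Complex.ofReal_pow, ← Complex.ofReal_ofNat, ← Complex.ofReal_mul,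
          Complex.ofReal_re]
        ring

/-- upper bound, high-loss regime: for γ ∈ (0, 1/√2] and any γ-admissible
triple, V ≤ γ²·(1 + 1/√2)/2. -/
theorem guessing_upper_bound_high_loss (γ : ℝ) (hγ : 0 < γ) (hγ' : γ ≤ 1/Real.sqrt 2)
    (P0 P1 Pe : Mat4) (h : Admissible γ P0 P1 Pe) :
    Gval P0 P1 ≤ γ^2 * (1 + 1/Real.sqrt 2)/2 :=
  guessing_upper_bound_high_loss_general γ P0 P1 Pe h
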